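/- arXiv:2301.07556 — 2 statements merged into one kernel-verified Lean document; each statement's English description precedes it below -/
import Mathlib

section
/- Suppose ℝⁿ itself is a strongly E-invex set with respect to Ψ, and let h₁, …, h_k : ℝⁿ → ℝ all be semi quasi strongly E-preinvex with respect to Ψ on ℝⁿ. Then the set S = {s ∈ ℝⁿ : h_i s ≤ 0 for all 1 ≤ i ≤ k} is strongly E-invex with respect to Ψ. -/
open Set

abbrev Rn (n : ℕ) := EuclideanSpace ℝ (Fin n)

/-- A set `S ⊆ ℝⁿ` is strongly E-invex (SEI) with respect to `Ψ`. -/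
def SEISet {n : ℕ} (E : Rn n → Rn n) (Ψ : Rn n × Rn n → Rn n) (S : Set (Rn n)) : Prop :=
  ∀ s ∈ S, ∀ t ∈ S, ∀ α ∈ Icc (0:ℝ) 1, ∀ l ∈ Icc (0:ℝ) 1,
    α • t + E t + l • Ψ (α • s + E s, α • t + E t) ∈ S

/-- Semi strongly E-preinvex (SSEP) with respect to `Ψ` on `S`. -/
def SSEP {n : ℕ} (E : Rn n → Rn n) (Ψ : Rn n × Rn n → Rn n) (S : Set (Rn n))
    (h : Rn n → ℝ) : Prop :=
  ∀ s ∈ S, ∀ t ∈ S, ∀ α ∈ Icc (0:ℝ) 1, ∀ l ∈ Icc (0:ℝ) 1,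
    h (α • t + E t + l • Ψ (α • s + E s, α • t + E t)) ≤ l * h s + (1 - l) * h t

/-- Strictly semi strongly E-preinvex (SSSEP) with respect to `Ψ` on `S`. -/
def SSSEP {n : ℕ} (E : Rn n → Rn n) (Ψ : Rn n × Rn n → Rn n) (S : Set (Rn n))
    (h : Rn n → ℝ) : Prop :=
  ∀ s ∈ S, ∀ t ∈ S, ∀ α ∈ Icc (0:ℝ) 1, ∀ l ∈ Ioo (0:ℝ) 1,
    α • s + E s ≠ α • t + E t →
    h (α • t + E t + l • Ψ (α • s + E s, α • t + E t)) < l * h s + (1 - l) * h t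

/-- Semi quasi strongly E-preinvex (SQSEP) with respect to `Ψ` on `S`. -/
def SQSEP {n : ℕ} (E : Rn n → Rn n) (Ψ : Rn n × Rn n → Rn n) (S : Set (Rn n))
    (h : Rn n → ℝ) : Prop :=
  ∀ s ∈ S, ∀ t ∈ S, ∀ α ∈ Icc (0:ℝ) 1, ∀ l ∈ Icc (0:ℝ) 1,
    h (α • t + E t + l • Ψ (α • s + E s, α • t + E t)) ≤ max (h s) (h t)

/-- Strongly E-preinvex (SEP) with respect to `Ψ` on `S`. -/
def SEP {n : ℕ} (E : Rn n → Rn n) (Ψ : Rn n × Rn n → Rn n) (S : Set (Rn n))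
    (h : Rn n → ℝ) : Prop :=
  ∀ s ∈ S, ∀ t ∈ S, ∀ α ∈ Icc (0:ℝ) 1, ∀ l ∈ Icc (0:ℝ) 1,
    h (α • t + E t + l • Ψ (α • s + E s, α • t + E t)) ≤ l * h (E s) + (1 - l) * h (E t)

/-- Quasi strongly E-preinvex (QSEP) with respect to `Ψ` on `S`. -/
def QSEP {n : ℕ} (E : Rn n → Rn n) (Ψ : Rn n × Rn n → Rn n) (S : Set (Rn n))
    (h : Rn n → ℝ) : Prop :=
  ∀ s ∈ S, ∀ t ∈ S, ∀ α ∈ Icc (0:ℝ) 1, ∀ l ∈ Icc (0:ℝ) 1,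
    h (α • t + E t + l • Ψ (α • s + E s, α • t + E t)) ≤ max (h (E s)) (h (E t))

/-- Semi pseudo strongly E-preinvex (SPSEP) with respect to `Ψ` on `S`. -/
def SPSEP {n : ℕ} (E : Rn n → Rn n) (Ψ : Rn n × Rn n → Rn n) (S : Set (Rn n))
    (h : Rn n → ℝ) : Prop :=
  ∃ b : Rn n × Rn n → ℝ, (∀ s t, 0 < b (s, t)) ∧
    ∀ s ∈ S, ∀ t ∈ S, h s < h t → ∀ α ∈ Icc (0:ℝ) 1, ∀ l ∈ Icc (0:ℝ) 1,
      h (α • t + E t + l • Ψ (α • s + E s, α • t + E t)) ≤ h t + l * (l - 1) * b (s, t)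

/-- A set `G ⊆ ℝⁿ × ℝ` is strongly G-invex with respect to `E` and `Ψ`. -/
def StronglyGInvex {n : ℕ} (E : Rn n → Rn n) (Ψ : Rn n × Rn n → Rn n)
    (G : Set (Rn n × ℝ)) : Prop :=
  ∀ p ∈ G, ∀ q ∈ G, ∀ α ∈ Icc (0:ℝ) 1, ∀ l ∈ Icc (0:ℝ) 1,
    (α • q.1 + E q.1 + l • Ψ (α • p.1 + E p.1, α • q.1 + E q.1),
      l * p.2 + (1 - l) * q.2) ∈ G

theorem SEISet.iInter {n : ℕ} {E : Rn n → Rn n} {Ψ : Rn n × Rn n → Rn n} {ι : Sort*}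
    {S : ι → Set (Rn n)} (hS : ∀ i, SEISet E Ψ (S i)) : SEISet E Ψ (⋂ i, S i) :=
  fun s hs t ht α hα l hl => mem_iInter.2 fun i => hS i s (mem_iInter.1 hs i) t (mem_iInter.1 ht i) α hα l hl

theorem SQSEP.seiSet_sublevel {n : ℕ} {E : Rn n → Rn n} {Ψ : Rn n × Rn n → Rn n}
    {h : Rn n → ℝ} (hh : SQSEP E Ψ univ h) (c : ℝ) : SEISet E Ψ {s | h s ≤ c} :=
  fun s hs t ht α hα l hl => (hh s trivial t trivial α hα l hl).trans (max_le hs ht)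

theorem stmt13_general {n : ℕ} (E : Rn n → Rn n) (Ψ : Rn n × Rn n → Rn n)
    (k : ℕ) (f : Fin k → Rn n → ℝ)
    (hf : ∀ i, SQSEP E Ψ (Set.univ : Set (Rn n)) (f i)) :
    SEISet E Ψ {s : Rn n | ∀ i, f i s ≤ 0} := by
  rw [ofPred_forall]
  exact SEISet.iInter fun i => (hf i).seiSet_sublevel 0

theorem stmt13 {n : ℕ} (E : Rn n → Rn n) (Ψ : Rn n × Rn n → Rn n)
    (hRn : SEISet E Ψ (Set.univ : Set (Rn n)))
    (k : ℕ) (f : Fin k → Rn n → ℝ)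
    (hf : ∀ i, SQSEP E Ψ (Set.univ : Set (Rn n)) (f i)) :
    SEISet E Ψ {s : Rn n | ∀ i, f i s ≤ 0} :=
  stmt13_general E Ψ k f hf
end

section
/- Let X ⊆ ℝⁿ be a strongly E-invex set with respect to Ψ, let h : ℝⁿ → ℝ be semi strongly E-preinvex with respect to Ψ on X, and fix α ∈ [0,1]. If t* ∈ X minimizes the function t ↦ h (α • t + E t) over X (i.e. h (α • t* + E t*) ≤ h (α • t + E t) for all t ∈ X), then α • t* + E t* ∈ X and h (α • t* + E t*) ≤ h t for all t ∈ X. -/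
open Set

theorem SEISet.smul_add_mem {n : ℕ} {E : Rn n → Rn n} {Ψ : Rn n × Rn n → Rn n} {S : Set (Rn n)}
    (hS : SEISet E Ψ S) {t : Rn n} (ht : t ∈ S) {α : ℝ} (hα : α ∈ Icc (0:ℝ) 1) :
    α • t + E t ∈ S := by
  simpa using hS t ht t ht α hα 0 ⟨le_rfl, zero_le_one⟩

theorem SSEP.apply_smul_add_le {n : ℕ} {E : Rn n → Rn n} {Ψ : Rn n × Rn n → Rn n} {S : Set (Rn n)}
    {h : Rn n → ℝ} (hh : SSEP E Ψ S h) {t : Rn n} (ht : t ∈ S) {α : ℝ} (hα : α ∈ Icc (0:ℝ) 1) :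
    h (α • t + E t) ≤ h t := by
  simpa using hh t ht t ht α hα 0 ⟨le_rfl, zero_le_one⟩

theorem stmt15 {n : ℕ} (E : Rn n → Rn n) (Ψ : Rn n × Rn n → Rn n) (X : Set (Rn n))
    (hX : SEISet E Ψ X) (h : Rn n → ℝ) (hh : SSEP E Ψ X h)
    (α : ℝ) (hα : α ∈ Icc (0:ℝ) 1)
    (tstar : Rn n) (htstar : tstar ∈ X)
    (hmin : ∀ t ∈ X, h (α • tstar + E tstar) ≤ h (α • t + E t)) :
    α • tstar + E tstar ∈ X ∧ ∀ t ∈ X, h (α • tstar + E tstar) ≤ h t :=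
  ⟨hX.smul_add_mem htstar hα, fun t ht => (hmin t ht).trans (hh.apply_smul_add_le ht hα)⟩
end
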